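/- arXiv:1703.03262 — 6 statements merged into one kernel-verified Lean document; each statement's English description precedes it below -/
import Mathlib

section
/- Let G = ({u0,u1},{A0,A1}) be a finite two-player game and let G' = ({u0−u1, u1−u0},{A0,A1}) be the zero-sum game with the same action sets in which player 0's utility is u0−u1 and player 1's utility is u1−u0. A mixed strategy profile x is a Nash equilibrium of G' if and only if x is envy-proof in G. -/
open Finset

variable {α β : Type*}

/-- Expected utility of `u` under the product of mixed strategies `p` and `q`. -/
def EU [Fintype α] [Fintype β] (u : α → β → ℝ) (p : α → ℝ) (q : β → ℝ) : ℝ :=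
  ∑ a, ∑ b, p a * q b * u a b

/-- `p` is a probability distribution (mixed strategy). -/
def IsMixed [Fintype α] (p : α → ℝ) : Prop :=
  (∀ a, 0 ≤ p a) ∧ ∑ a, p a = 1

/-- The pure action `a` viewed as a mixed strategy. -/
def pureStrat [DecidableEq α] (a : α) : α → ℝ :=
  fun a' => if a' = a then 1 else 0

/-- `(p,q)` is a Nash equilibrium of the two-player game `({u0,u1},{α,β})`. -/
def IsNash [Fintype α] [Fintype β] [DecidableEq α] [DecidableEq β]
    (u0 u1 : α → β → ℝ) (p : α → ℝ) (q : β → ℝ) : Prop :=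
  (∀ a' : α, EU u0 (pureStrat a') q ≤ EU u0 p q) ∧
  (∀ b' : β, EU u1 p (pureStrat b') ≤ EU u1 p q)

/-- `(p,q)` is immune in the two-player game `({u0,u1},{α,β})`. -/
def IsImmune [Fintype α] [Fintype β] [DecidableEq α] [DecidableEq β]
    (u0 u1 : α → β → ℝ) (p : α → ℝ) (q : β → ℝ) : Prop :=
  (∀ a' : α, EU u1 (pureStrat a') q ≥ EU u1 p q) ∧
  (∀ b' : β, EU u0 p (pureStrat b') ≥ EU u0 p q)

/-- `(p,q)` is envy-proof in the two-player game `({u0,u1},{α,β})`. -/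
def IsEnvyProof [Fintype α] [Fintype β] [DecidableEq α] [DecidableEq β]
    (u0 u1 : α → β → ℝ) (p : α → ℝ) (q : β → ℝ) : Prop :=
  (∀ a' : α, EU u0 (pureStrat a') q - EU u0 p q ≤ EU u1 (pureStrat a') q - EU u1 p q) ∧
  (∀ b' : β, EU u1 p (pureStrat b') - EU u1 p q ≤ EU u0 p (pureStrat b') - EU u0 p q)

theorem sub_le_sub_iff_sub_le_sub {G : Type*} [AddCommGroup G] [PartialOrder G]
    [IsOrderedAddMonoid G] (a b c d : G) : a - b ≤ c - d ↔ a - c ≤ b - d := by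
  rw [sub_le_sub_iff, sub_le_sub_iff, add_comm c b]

theorem EU_sub [Fintype α] [Fintype β] (u v : α → β → ℝ) (p : α → ℝ) (q : β → ℝ) :
    EU (fun a b => u a b - v a b) p q = EU u p q - EU v p q := by
  simp only [EU, mul_sub, Finset.sum_sub_distrib]

theorem nash_of_diff_iff_envyProof_general
    [Fintype α] [Fintype β] [DecidableEq α] [DecidableEq β]
    (u0 u1 : α → β → ℝ) (p : α → ℝ) (q : β → ℝ) :
    IsNash (fun a b => u0 a b - u1 a b) (fun a b => u1 a b - u0 a b) p q ↔
      IsEnvyProof u0 u1 p q := by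
  simp only [IsNash, IsEnvyProof, EU_sub]
  exact and_congr (forall_congr' fun _ => sub_le_sub_iff_sub_le_sub ..)
    (forall_congr' fun _ => sub_le_sub_iff_sub_le_sub ..)

/-- `x` is a Nash equilibrium of the zero-sum game
`G' = ({u0−u1, u1−u0},{A0,A1})` iff `x` is envy-proof in `G = ({u0,u1},{A0,A1})`. -/
theorem nash_of_diff_iff_envyProof
    [Fintype α] [Fintype β] [DecidableEq α] [DecidableEq β]
    [Nonempty α] [Nonempty β]
    (u0 u1 : α → β → ℝ) (p : α → ℝ) (q : β → ℝ)
    (hp : IsMixed p) (hq : IsMixed q) :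
    IsNash (fun a b => u0 a b - u1 a b) (fun a b => u1 a b - u0 a b) p q ↔
      IsEnvyProof u0 u1 p q :=
  nash_of_diff_iff_envyProof_general u0 u1 p q
end

section
/- Consider the two-player game G* with action sets A0 = A1 = {M, S} and utilities u0(M,M) = u1(M,M) = 4, u0(M,S) = 1, u1(M,S) = 3, u0(S,M) = 3, u1(S,M) = 1, u0(S,S) = u1(S,S) = 0. Then the pure profile (M,M) is a Nash equilibrium of G*, but no mixed strategy profile of G* is both a Nash equilibrium and envy-proof. In particular, there exists a finite two-player game that admits no envy-proof Nash equilibrium. -/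
open Finset

variable {α β : Type*}

/-- Player 0's utility in the coordination game `G*` (`true` = movie `M`, `false` = shopping `S`). -/
def gStar0 : Bool → Bool → ℝ
  | true, true => 4
  | true, false => 1
  | false, true => 3
  | false, false => 0

/-- Player 1's utility in the coordination game `G*`. -/
def gStar1 : Bool → Bool → ℝ
  | true, true => 4
  | true, false => 3
  | false, true => 1
  | false, false => 0

/-! In `G*` the difference `u0 - u1` is `2 (𝟙[b = M] - 𝟙[a = M])`, so for mixed strategies it only
depends on the two marginal weights of `M`. Envy-proofness against a deviation to `S` then forces
each player to put weight `0` on `M`, i.e. the profile is `(S,S)`; but there player 0 gains by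
switching to `M`, so `(S,S)` is not a Nash equilibrium. -/

theorem EU_bool (u : Bool → Bool → ℝ) (p q : Bool → ℝ) :
    EU u p q = p true * q true * u true true + p true * q false * u true false
      + p false * q true * u false true + p false * q false * u false false := by
  simp only [EU, Fintype.sum_bool]
  ring

theorem IsMixed.apply_false {p : Bool → ℝ} (hp : IsMixed p) : p false = 1 - p true := by
  have h := hp.2
  rw [Fintype.sum_bool] at h
  linarith

theorem isMixed_pureStrat [Fintype α] [DecidableEq α] (a : α) : IsMixed (pureStrat a) :=
  ⟨fun _ => by unfold pureStrat; split_ifs <;> norm_num, by simp [pureStrat]⟩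

theorem gStar_isNash_true : IsNash gStar0 gStar1 (pureStrat true) (pureStrat true) := by
  constructor <;> intro a <;> cases a <;> norm_num [EU_bool, pureStrat, gStar0, gStar1]

theorem gStar_EU_sub {p q : Bool → ℝ} (hp : IsMixed p) (hq : IsMixed q) :
    EU gStar0 p q - EU gStar1 p q = 2 * (q true - p true) := by
  simp only [EU_bool, gStar0, gStar1, hp.apply_false, hq.apply_false]
  ring

theorem IsEnvyProof.gStar_apply_true_eq_zero {p q : Bool → ℝ} (hp : IsMixed p) (hq : IsMixed q)
    (h : IsEnvyProof gStar0 gStar1 p q) : p true = 0 ∧ q true = 0 := by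
  -- each envy inequality says that deviating to `S` does not widen the gap `u0 - u1` in one's favour
  have envy0 := h.1 false
  have envy1 := h.2 false
  have gap := gStar_EU_sub hp hq
  have gap0 := gStar_EU_sub (isMixed_pureStrat false) hq
  have gap1 := gStar_EU_sub hp (isMixed_pureStrat false)
  simp only [pureStrat, Bool.true_eq_false, if_false] at gap0 gap1
  constructor <;> linarith [hp.1 true, hq.1 true]

theorem gStar_not_isNash_of_apply_true_eq_zero {p q : Bool → ℝ} (hp : IsMixed p) (hq : IsMixed q)
    (hp0 : p true = 0) (hq0 : q true = 0) : ¬ IsNash gStar0 gStar1 p q := by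
  intro h
  have deviate := h.1 true
  norm_num [EU_bool, pureStrat, gStar0, hp.apply_false, hq.apply_false, hp0, hq0] at deviate

theorem gStar_not_isNash_isEnvyProof : ¬ ∃ (p q : Bool → ℝ), IsMixed p ∧ IsMixed q ∧
    IsNash gStar0 gStar1 p q ∧ IsEnvyProof gStar0 gStar1 p q := by
  rintro ⟨p, q, hp, hq, hNash, hEnvy⟩
  obtain ⟨hp0, hq0⟩ := hEnvy.gStar_apply_true_eq_zero hp hq
  exact gStar_not_isNash_of_apply_true_eq_zero hp hq hp0 hq0 hNash

/-- in `G*`, the pure profile (M,M) is a Nash equilibrium, but no mixed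
strategy profile is both a Nash equilibrium and envy-proof; in particular, some finite
two-player game admits no envy-proof Nash equilibrium. -/
theorem gStar_no_envyProof_nash :
    IsNash gStar0 gStar1 (pureStrat true) (pureStrat true) ∧
    (¬ ∃ (p q : Bool → ℝ), IsMixed p ∧ IsMixed q ∧
        IsNash gStar0 gStar1 p q ∧ IsEnvyProof gStar0 gStar1 p q) ∧
    (∃ (u0 u1 : Bool → Bool → ℝ), ¬ ∃ (p q : Bool → ℝ), IsMixed p ∧ IsMixed q ∧
        IsNash u0 u1 p q ∧ IsEnvyProof u0 u1 p q) :=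
  ⟨gStar_isNash_true, gStar_not_isNash_isEnvyProof, gStar0, gStar1, gStar_not_isNash_isEnvyProof⟩
end

section
/- Consider the two-player game G* with action sets A0 = A1 = {M, S} and utilities u0(M,M) = u1(M,M) = 4, u0(M,S) = 1, u1(M,S) = 3, u0(S,M) = 3, u1(S,M) = 1, u0(S,S) = u1(S,S) = 0. Then no mixed strategy profile of G* is both a Nash equilibrium and immune. In particular, there exists a finite two-player game that admits no immune Nash equilibrium. -/
open Finset

variable {α β : Type*}

theorem EU_gStar0 {p q : Bool → ℝ} (hp : ∑ a, p a = 1) (hq : ∑ b, q b = 1) :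
    EU gStar0 p q = p true + 3 * q true := by
  simp only [EU, Fintype.sum_bool, gStar0] at hp hq ⊢
  linear_combination p true * hq + 3 * q true * hp

theorem EU_gStar1 {p q : Bool → ℝ} (hp : ∑ a, p a = 1) (hq : ∑ b, q b = 1) :
    EU gStar1 p q = 3 * p true + q true := by
  simp only [EU, Fintype.sum_bool, gStar1] at hp hq ⊢
  linear_combination 3 * p true * hq + q true * hp

theorem one_le_of_isNash_gStar {p q : Bool → ℝ} (hp : IsMixed p) (hq : IsMixed q)
    (h : IsNash gStar0 gStar1 p q) : 1 ≤ p true := by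
  have hM := h.1 true
  rw [EU_gStar0 (isMixed_pureStrat true).2 hq.2, EU_gStar0 hp.2 hq.2] at hM
  simp only [pureStrat, if_true] at hM
  linarith

theorem nonpos_of_isImmune_gStar {p q : Bool → ℝ} (hp : IsMixed p) (hq : IsMixed q)
    (h : IsImmune gStar0 gStar1 p q) : p true ≤ 0 := by
  have hS := h.1 false
  rw [EU_gStar1 (isMixed_pureStrat false).2 hq.2, EU_gStar1 hp.2 hq.2] at hS
  simp only [pureStrat, Bool.true_eq_false, if_false] at hS
  linarith

theorem gStar_not_isNash_and_isImmune :
    ¬ ∃ (p q : Bool → ℝ), IsMixed p ∧ IsMixed q ∧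
        IsNash gStar0 gStar1 p q ∧ IsImmune gStar0 gStar1 p q := by
  rintro ⟨p, q, hp, hq, hNash, hImmune⟩
  linarith [one_le_of_isNash_gStar hp hq hNash, nonpos_of_isImmune_gStar hp hq hImmune]

/-- in `G*`, no mixed strategy profile is both a Nash equilibrium and immune;
in particular, some finite two-player game admits no immune Nash equilibrium. -/
theorem gStar_no_immune_nash :
    (¬ ∃ (p q : Bool → ℝ), IsMixed p ∧ IsMixed q ∧
        IsNash gStar0 gStar1 p q ∧ IsImmune gStar0 gStar1 p q) ∧
    (∃ (u0 u1 : Bool → Bool → ℝ), ¬ ∃ (p q : Bool → ℝ), IsMixed p ∧ IsMixed q ∧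
        IsNash u0 u1 p q ∧ IsImmune u0 u1 p q) :=
  ⟨gStar_not_isNash_and_isImmune, gStar0, gStar1, gStar_not_isNash_and_isImmune⟩
end

section
/- Let G = ({u0,u1},{A0,A1}) be a finite two-player game. A mixed strategy profile x is both a Nash equilibrium of G and immune in G if and only if, for each b ∈ {0,1}, x is a Nash equilibrium of the two-player zero-sum game G_b with the same action sets in which player b's utility is u_b and player b̄'s utility is −u_b. Equivalently, x is an immune Nash equilibrium of G if and only if for each b ∈ {0,1}, each pure action x'_b ∈ A_b and each pure action x'_{b̄} ∈ A_{b̄}: u_b(x_b : x'_{b̄}) ≥ u_b(x) ≥ u_b(x'_b : x_{b̄}). -/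
open Finset

variable {α β : Type*}

theorem EU_neg [Fintype α] [Fintype β] (u : α → β → ℝ) (p : α → ℝ) (q : β → ℝ) :
    EU (fun a b => -u a b) p q = -EU u p q := by
  simp only [EU, mul_neg, sum_neg_distrib]

section ZeroSum

variable [Fintype α] [Fintype β] [DecidableEq α] [DecidableEq β]
  (u : α → β → ℝ) (p : α → ℝ) (q : β → ℝ)

theorem isNash_neg_right_iff :
    IsNash u (fun a b => -u a b) p q ↔
      (∀ a' : α, EU u (pureStrat a') q ≤ EU u p q) ∧
      (∀ b' : β, EU u p q ≤ EU u p (pureStrat b')) := by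
  simp only [IsNash, EU_neg, neg_le_neg_iff]

theorem isNash_neg_left_iff :
    IsNash (fun a b => -u a b) u p q ↔
      (∀ a' : α, EU u p q ≤ EU u (pureStrat a') q) ∧
      (∀ b' : β, EU u p (pureStrat b') ≤ EU u p q) := by
  simp only [IsNash, EU_neg, neg_le_neg_iff]

end ZeroSum

theorem isNash_and_isImmune_iff_isNash_zeroSum
    [Fintype α] [Fintype β] [DecidableEq α] [DecidableEq β]
    (u0 u1 : α → β → ℝ) (p : α → ℝ) (q : β → ℝ) :
    (IsNash u0 u1 p q ∧ IsImmune u0 u1 p q) ↔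
      (IsNash u0 (fun a b => -u0 a b) p q ∧ IsNash (fun a b => -u1 a b) u1 p q) := by
  rw [isNash_neg_right_iff, isNash_neg_left_iff, IsNash, IsImmune]
  simp only [ge_iff_le]
  tauto

theorem immune_nash_iff_zeroSum_nash_general
    [Fintype α] [Fintype β] [DecidableEq α] [DecidableEq β]
    [Nonempty α] [Nonempty β]
    (u0 u1 : α → β → ℝ) (p : α → ℝ) (q : β → ℝ) :
    ((IsNash u0 u1 p q ∧ IsImmune u0 u1 p q) ↔
      (IsNash u0 (fun a b => -u0 a b) p q ∧
       IsNash (fun a b => -u1 a b) u1 p q)) ∧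
    ((IsNash u0 u1 p q ∧ IsImmune u0 u1 p q) ↔
      ((∀ (a' : α) (b' : β),
          EU u0 p (pureStrat b') ≥ EU u0 p q ∧ EU u0 p q ≥ EU u0 (pureStrat a') q) ∧
       (∀ (a' : α) (b' : β),
          EU u1 (pureStrat a') q ≥ EU u1 p q ∧ EU u1 p q ≥ EU u1 p (pureStrat b')))) := by
  refine ⟨isNash_and_isImmune_iff_isNash_zeroSum u0 u1 p q, ?_⟩
  rw [isNash_and_isImmune_iff_isNash_zeroSum, isNash_neg_right_iff, isNash_neg_left_iff]
  -- each condition mentions only one of the two pure deviations, so with nonempty action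
  -- sets the double quantifier splits into two single ones
  simp only [ge_iff_le, forall_and, forall_const]
  tauto

/-- `x` is an immune Nash equilibrium of `G` iff for each `b ∈ {0,1}`,
`x` is a Nash equilibrium of the zero-sum game `G_b = ({u_b, −u_b})`, and equivalently
iff `u_b(x_b : x'_b̄) ≥ u_b(x) ≥ u_b(x'_b : x_b̄)` for all pure deviations. -/
theorem immune_nash_iff_zeroSum_nash
    [Fintype α] [Fintype β] [DecidableEq α] [DecidableEq β]
    [Nonempty α] [Nonempty β]
    (u0 u1 : α → β → ℝ) (p : α → ℝ) (q : β → ℝ)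
    (hp : IsMixed p) (hq : IsMixed q) :
    ((IsNash u0 u1 p q ∧ IsImmune u0 u1 p q) ↔
      (IsNash u0 (fun a b => -u0 a b) p q ∧
       IsNash (fun a b => -u1 a b) u1 p q)) ∧
    ((IsNash u0 u1 p q ∧ IsImmune u0 u1 p q) ↔
      ((∀ (a' : α) (b' : β),
          EU u0 p (pureStrat b') ≥ EU u0 p q ∧ EU u0 p q ≥ EU u0 (pureStrat a') q) ∧
       (∀ (a' : α) (b' : β),
          EU u1 (pureStrat a') q ≥ EU u1 p q ∧ EU u1 p q ≥ EU u1 p (pureStrat b')))) :=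
  immune_nash_iff_zeroSum_nash_general u0 u1 p q
end

section
/- Let G = ({u0,u1},{A0,A1}) be a finite two-player game. Define v0 = max over probability distributions p on A0 of (min over a1 ∈ A1 of E_{a0∼p}[u0(a0,a1)]) and v1 = max over probability distributions q on A1 of (min over a0 ∈ A0 of E_{a1∼q}[u1(a0,a1)]). Then G admits a mixed strategy profile that is both a Nash equilibrium and immune if and only if there exist a distribution p on A0 and a distribution q on A1 such that: for every a1 ∈ A1, E_{a0∼p}[u0(a0,a1)] ≥ v0 and E_{a0∼p}[u1(a0,a1)] ≤ v1, and for every a0 ∈ A0, E_{a1∼q}[u1(a0,a1)] ≥ v1 and E_{a1∼q}[u0(a0,a1)] ≤ v0. Moreover, any such pair (p,q) is itself an immune Nash equilibrium of G. -/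
/-!
At an immune Nash equilibrium `(p, q)`, player 0's payoff is guaranteed by `p` (immunity against
player 1's deviations) and is the most player 0 can get against `q` (Nash condition), so it is the
maxmin value `v0`; symmetrically for player 1. Conversely, the four bounds force the payoffs of
`(p, q)` to be `v0` and `v1`, and then each bound is one of the Nash or immunity inequalities.
-/

open Finset

variable {α β : Type*}

/-- Expected utility when player 0 plays the mixed strategy `p` and player 1 plays pure `b`. -/
def rowEU [Fintype α] (u : α → β → ℝ) (p : α → ℝ) (b : β) : ℝ :=
  ∑ a, p a * u a b

/-- Expected utility when player 1 plays the mixed strategy `q` and player 0 plays pure `a`. -/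
def colEU [Fintype β] (u : α → β → ℝ) (q : β → ℝ) (a : α) : ℝ :=
  ∑ b, q b * u a b

section
variable [Fintype α] [Fintype β]

lemma IsMixed.sum_mul_le {p f : α → ℝ} (hp : IsMixed p) {c : ℝ} (h : ∀ a, f a ≤ c) :
    ∑ a, p a * f a ≤ c :=
  calc ∑ a, p a * f a ≤ ∑ a, p a * c :=
        sum_le_sum fun a _ => mul_le_mul_of_nonneg_left (h a) (hp.1 a)
    _ = c := by rw [← sum_mul, hp.2, one_mul]

lemma IsMixed.le_sum_mul {p f : α → ℝ} (hp : IsMixed p) {c : ℝ} (h : ∀ a, c ≤ f a) :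
    c ≤ ∑ a, p a * f a :=
  calc c = ∑ a, p a * c := by rw [← sum_mul, hp.2, one_mul]
    _ ≤ ∑ a, p a * f a :=
        sum_le_sum fun a _ => mul_le_mul_of_nonneg_left (h a) (hp.1 a)

lemma EU_eq_sum_colEU (u : α → β → ℝ) (p : α → ℝ) (q : β → ℝ) :
    EU u p q = ∑ a, p a * colEU u q a := by
  simp only [EU, colEU, mul_sum, mul_assoc]

/-- Since `colEU u` is `rowEU (flip u)` by definition, this lets player 1's facts be read off from
player 0's for the game `flip u`. -/
lemma EU_flip (u : α → β → ℝ) (p : α → ℝ) (q : β → ℝ) : EU (flip u) q p = EU u p q := by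
  simp only [EU, flip]
  rw [sum_comm]
  exact sum_congr rfl fun a _ => sum_congr rfl fun b _ => by ring

lemma EU_eq_sum_rowEU (u : α → β → ℝ) (p : α → ℝ) (q : β → ℝ) :
    EU u p q = ∑ b, q b * rowEU u p b := by
  rw [← EU_flip, EU_eq_sum_colEU]
  rfl

lemma EU_pureStrat_left [DecidableEq α] (u : α → β → ℝ) (a : α) (q : β → ℝ) :
    EU u (pureStrat a) q = colEU u q a := by
  simp [EU_eq_sum_colEU, pureStrat, ite_mul]

lemma EU_pureStrat_right [DecidableEq β] (u : α → β → ℝ) (p : α → ℝ) (b : β) :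
    EU u p (pureStrat b) = rowEU u p b := by
  simp [EU_eq_sum_rowEU, pureStrat, ite_mul]

lemma isNash_iff [DecidableEq α] [DecidableEq β] (u0 u1 : α → β → ℝ) (p : α → ℝ) (q : β → ℝ) :
    IsNash u0 u1 p q ↔
      (∀ a, colEU u0 q a ≤ EU u0 p q) ∧ (∀ b, rowEU u1 p b ≤ EU u1 p q) := by
  simp only [IsNash, EU_pureStrat_left, EU_pureStrat_right]

lemma isImmune_iff [DecidableEq α] [DecidableEq β] (u0 u1 : α → β → ℝ) (p : α → ℝ)
    (q : β → ℝ) :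
    IsImmune u0 u1 p q ↔
      (∀ a, EU u1 p q ≤ colEU u1 q a) ∧ (∀ b, EU u0 p q ≤ rowEU u0 p b) := by
  simp only [IsImmune, EU_pureStrat_left, EU_pureStrat_right, ge_iff_le]

/-- The paper's `v0` is `maxminValue u0` and its `v1` is `maxminValue (flip u1)`. -/
noncomputable def maxminValue (u : α → β → ℝ) : ℝ :=
  sSup {r : ℝ | ∃ p : α → ℝ, IsMixed p ∧ r = ⨅ b : β, rowEU u p b}

variable {u : α → β → ℝ} {p : α → ℝ} {q : β → ℝ} {e : ℝ}

lemma EU_eq_of_le_rowEU_of_colEU_le (hp : IsMixed p) (hq : IsMixed q)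
    (hrow : ∀ b, e ≤ rowEU u p b) (hcol : ∀ a, colEU u q a ≤ e) : EU u p q = e :=
  le_antisymm (EU_eq_sum_colEU u p q ▸ hp.sum_mul_le hcol)
    (EU_eq_sum_rowEU u p q ▸ hq.le_sum_mul hrow)

lemma isNash_and_isImmune_of_bounds [DecidableEq α] [DecidableEq β] {u0 u1 : α → β → ℝ}
    {v0 v1 : ℝ} (hp : IsMixed p) (hq : IsMixed q)
    (hrow : ∀ b, rowEU u0 p b ≥ v0 ∧ rowEU u1 p b ≤ v1)
    (hcol : ∀ a, colEU u1 q a ≥ v1 ∧ colEU u0 q a ≤ v0) :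
    IsNash u0 u1 p q ∧ IsImmune u0 u1 p q := by
  have h0 : EU u0 p q = v0 :=
    EU_eq_of_le_rowEU_of_colEU_le hp hq (fun b => (hrow b).1) fun a => (hcol a).2
  have h1 : EU u1 p q = v1 := EU_flip u1 p q ▸
    EU_eq_of_le_rowEU_of_colEU_le hq hp (fun a => (hcol a).1) fun b => (hrow b).2
  rw [isNash_iff, isImmune_iff, h0, h1]
  exact ⟨⟨fun a => (hcol a).2, fun b => (hrow b).2⟩, fun a => (hcol a).1, fun b => (hrow b).1⟩

lemma iInf_rowEU_le_of_colEU_le {p' : α → ℝ} (hp' : IsMixed p') (hq : IsMixed q)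
    (hcol : ∀ a, colEU u q a ≤ e) : ⨅ b, rowEU u p' b ≤ e :=
  calc ⨅ b, rowEU u p' b ≤ ∑ b, q b * rowEU u p' b :=
        hq.le_sum_mul fun b => ciInf_le (Set.finite_range _).bddBelow b
    _ = ∑ a, p' a * colEU u q a := by rw [← EU_eq_sum_rowEU, EU_eq_sum_colEU]
    _ ≤ e := hp'.sum_mul_le hcol

lemma maxminValue_eq_of_le_rowEU_of_colEU_le [Nonempty β] (hp : IsMixed p) (hq : IsMixed q)
    (hrow : ∀ b, e ≤ rowEU u p b) (hcol : ∀ a, colEU u q a ≤ e) : maxminValue u = e := by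
  have hp_value : ⨅ b, rowEU u p b = e :=
    le_antisymm (iInf_rowEU_le_of_colEU_le hp hq hcol) (le_ciInf hrow)
  refine IsGreatest.csSup_eq ⟨⟨p, hp, hp_value.symm⟩, ?_⟩
  rintro r ⟨p', hp', rfl⟩
  exact iInf_rowEU_le_of_colEU_le hp' hq hcol

end

/-- with `v0 = max_p min_{a1} E_{a0∼p}[u0]` and `v1 = max_q min_{a0} E_{a1∼q}[u1]`,
`G` admits an immune Nash equilibrium iff distributions `p`, `q` exist with
`E_{a0∼p}[u0(·,a1)] ≥ v0`, `E_{a0∼p}[u1(·,a1)] ≤ v1` for all `a1`, and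
`E_{a1∼q}[u1(a0,·)] ≥ v1`, `E_{a1∼q}[u0(a0,·)] ≤ v0` for all `a0`;
moreover any such pair `(p,q)` is itself an immune Nash equilibrium. -/
theorem immune_nash_lp_characterization
    [Fintype α] [Fintype β] [DecidableEq α] [DecidableEq β]
    [Nonempty α] [Nonempty β]
    (u0 u1 : α → β → ℝ) (v0 v1 : ℝ)
    (hv0 : v0 = sSup {r : ℝ | ∃ p : α → ℝ, IsMixed p ∧ r = ⨅ b : β, rowEU u0 p b})
    (hv1 : v1 = sSup {r : ℝ | ∃ q : β → ℝ, IsMixed q ∧ r = ⨅ a : α, colEU u1 q a}) :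
    ((∃ (p : α → ℝ) (q : β → ℝ), IsMixed p ∧ IsMixed q ∧
        IsNash u0 u1 p q ∧ IsImmune u0 u1 p q) ↔
      (∃ (p : α → ℝ) (q : β → ℝ), IsMixed p ∧ IsMixed q ∧
        (∀ b : β, rowEU u0 p b ≥ v0 ∧ rowEU u1 p b ≤ v1) ∧
        (∀ a : α, colEU u1 q a ≥ v1 ∧ colEU u0 q a ≤ v0))) ∧
    (∀ (p : α → ℝ) (q : β → ℝ), IsMixed p → IsMixed q →
      (∀ b : β, rowEU u0 p b ≥ v0 ∧ rowEU u1 p b ≤ v1) →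
      (∀ a : α, colEU u1 q a ≥ v1 ∧ colEU u0 q a ≤ v0) →
      IsNash u0 u1 p q ∧ IsImmune u0 u1 p q) := by
  have hv0 : v0 = maxminValue u0 := hv0
  have hv1 : v1 = maxminValue (flip u1) := hv1
  refine ⟨⟨?_, fun ⟨p, q, hp, hq, hrow, hcol⟩ =>
    ⟨p, q, hp, hq, isNash_and_isImmune_of_bounds hp hq hrow hcol⟩⟩,
    fun _ _ hp hq hrow hcol => isNash_and_isImmune_of_bounds hp hq hrow hcol⟩
  rintro ⟨p, q, hp, hq, hN, hI⟩
  rw [isNash_iff] at hN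
  rw [isImmune_iff] at hI
  have h0 : EU u0 p q = v0 := hv0 ▸ (maxminValue_eq_of_le_rowEU_of_colEU_le hp hq hI.2 hN.1).symm
  have h1 : EU u1 p q = v1 := hv1 ▸ (maxminValue_eq_of_le_rowEU_of_colEU_le hq hp hI.1 hN.2).symm
  exact ⟨p, q, hp, hq, fun b => ⟨h0 ▸ hI.2 b, h1 ▸ hN.2 b⟩, fun a => ⟨h1 ▸ hI.1 a, h0 ▸ hN.1 a⟩⟩
end

section
/- Let G = ({u_i}_{i∈[m]}, A) be an m-player game that is γ-varied for some γ ≥ 0, and let t ∈ ℕ. Then every mixed strategy profile that is a Nash equilibrium of G is (γt, t)-coalitional envy-proof. -/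
open Finset

variable {m : ℕ} {A : Type*}

/-- `x` is a mixed strategy profile: each player's strategy is a probability distribution. -/
def IsMixedProfile [Fintype A] (x : Fin m → A → ℝ) : Prop :=
  ∀ i, (∀ a, 0 ≤ x i a) ∧ ∑ a, x i a = 1

/-- Expected utility of `u` under the product distribution of the mixed profile `x`. -/
def pEU [Fintype A] (u : (Fin m → A) → ℝ) (x : Fin m → A → ℝ) : ℝ :=
  ∑ s : Fin m → A, (∏ i, x i (s i)) * u s

/-- The pure action `a` viewed as a mixed strategy. -/
def pureS [DecidableEq A] (a : A) : A → ℝ := fun b => if b = a then 1 else 0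

/-- The profile `(x_{−S} : x'_S)`: players in `S` deviate to the pure actions given by
`d`, the others keep playing as in `x`. -/
def deviate [DecidableEq A] (x : Fin m → A → ℝ) (S : Finset (Fin m)) (d : Fin m → A) :
    Fin m → A → ℝ :=
  fun i => if i ∈ S then pureS (d i) else x i

/-- `x` is a Nash equilibrium of the `m`-player game `({u_i}, A)`. -/
def IsNashM [Fintype A] [DecidableEq A] (u : Fin m → (Fin m → A) → ℝ)
    (x : Fin m → A → ℝ) : Prop :=
  ∀ (i : Fin m) (a : A), pEU (u i) (deviate x {i} (fun _ => a)) ≤ pEU (u i) x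

/-- `x` is `(ε,t)`-coalitional envy-proof. -/
def CoalEnvyProof [Fintype A] [DecidableEq A] (u : Fin m → (Fin m → A) → ℝ)
    (ε : ℝ) (t : ℕ) (x : Fin m → A → ℝ) : Prop :=
  ∀ S : Finset (Fin m), S.card ≤ t → ∀ d : Fin m → A, ∀ i ∈ S, ∀ j ∉ S,
    pEU (u i) (deviate x S d) - pEU (u i) x ≤
      pEU (u j) (deviate x S d) - pEU (u j) x + ε

/-- The game is γ-varied: for all players `i, j, k`, all pure profiles and unilateral
deviations of `i`, the changes in `u_j` and `u_k` differ by at most `γ`. -/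
def Varied [Fintype A] [DecidableEq A] (u : Fin m → (Fin m → A) → ℝ) (γ : ℝ) : Prop :=
  ∀ (i j k : Fin m) (s : Fin m → A) (a : A),
    |(u j (Function.update s i a) - u j s) - (u k (Function.update s i a) - u k s)| ≤ γ

/-!
Let the members of the coalition deviate one at a time. When player `k` switches to the pure
action `b`, the change in a player's expected utility is the expectation, under the current
profile, of the pure change `u (s[k ↦ b]) - u s`; so by γ-variedness the changes of any two
players differ by at most γ. Telescoping over the at most `t` members of the coalition gives
`γ t`.
-/

section ExpectedUtility

variable [Fintype A] {f g : (Fin m → A) → ℝ} {y : Fin m → A → ℝ}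

lemma IsMixedProfile.sum_prod_eq_one (hy : IsMixedProfile y) :
    ∑ s : Fin m → A, ∏ i, y i (s i) = 1 := by
  rw [← Fintype.prod_sum]
  exact Finset.prod_eq_one fun i _ => (hy i).2

lemma pEU_sub : pEU (fun s => f s - g s) y = pEU f y - pEU g y := by
  simp only [pEU, mul_sub, Finset.sum_sub_distrib]

lemma abs_pEU_le (hy : IsMixedProfile y) {γ : ℝ} (hf : ∀ s, |f s| ≤ γ) :
    |pEU f y| ≤ γ := by
  have hw : ∀ s : Fin m → A, 0 ≤ ∏ i, y i (s i) :=
    fun s => Finset.prod_nonneg fun i _ => (hy i).1 (s i)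
  calc |pEU f y| ≤ ∑ s : Fin m → A, (∏ i, y i (s i)) * |f s| := by
        refine (Finset.abs_sum_le_sum_abs _ _).trans_eq ?_
        simp only [abs_mul, abs_of_nonneg (hw _)]
    _ ≤ ∑ s : Fin m → A, (∏ i, y i (s i)) * γ :=
        Finset.sum_le_sum fun s _ => mul_le_mul_of_nonneg_left (hf s) (hw s)
    _ = γ := by rw [← Finset.sum_mul, hy.sum_prod_eq_one, one_mul]

lemma pEU_eq_sum_funSplitAt (k : Fin m) :
    pEU f y = ∑ a, y k a * ∑ r : {j // j ≠ k} → A,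
      (∏ j, y j.1 (r j)) * f ((Equiv.funSplitAt k A).symm (a, r)) := by
  rw [pEU, ← (Equiv.funSplitAt k A).symm.sum_comp, Fintype.sum_prod_type]
  refine Finset.sum_congr rfl fun a _ => ?_
  rw [Finset.mul_sum]
  refine Finset.sum_congr rfl fun r _ => ?_
  have hsplit := (Equiv.funSplitAt k A).apply_symm_apply (a, r)
  simp only [Equiv.funSplitAt_apply, Prod.mk.injEq, funext_iff] at hsplit
  rw [Fintype.prod_eq_mul_prod_subtype_ne _ k, mul_assoc, hsplit.1]
  simp only [hsplit.2]

lemma pEU_update_pureS [DecidableEq A] (k : Fin m) (b : A) (hk : ∑ a, y k a = 1) :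
    pEU f (Function.update y k (pureS b)) = pEU (fun s => f (Function.update s k b)) y := by
  have hrest : ∀ r : {j // j ≠ k} → A,
      ∏ j, Function.update y k (pureS b) j.1 (r j) = ∏ j, y j.1 (r j) :=
    fun r => Finset.prod_congr rfl fun j _ => by rw [Function.update_of_ne j.2]
  have hupdate : ∀ a (r : {j // j ≠ k} → A),
      Function.update ((Equiv.funSplitAt k A).symm (a, r)) k b =
        (Equiv.funSplitAt k A).symm (b, r) := by
    intro a r
    funext j
    rcases eq_or_ne j k with rfl | hj <;> simp [Function.update_of_ne, *]
  rw [pEU_eq_sum_funSplitAt k, pEU_eq_sum_funSplitAt k]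
  simp only [hrest, hupdate, Function.update_self, pureS, ite_mul, one_mul, zero_mul,
    Finset.sum_ite_eq', Finset.mem_univ, if_true, ← Finset.sum_mul, hk]

lemma abs_pEU_update_pureS_sub_sub_le [DecidableEq A] {γ : ℝ} (hy : IsMixedProfile y)
    (k : Fin m) (b : A)
    (hfg : ∀ s, |(f (Function.update s k b) - f s) - (g (Function.update s k b) - g s)| ≤ γ) :
    |(pEU f (Function.update y k (pureS b)) - pEU f y) -
      (pEU g (Function.update y k (pureS b)) - pEU g y)| ≤ γ := by
  rw [pEU_update_pureS k b (hy k).2, pEU_update_pureS k b (hy k).2, ← pEU_sub, ← pEU_sub,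
    ← pEU_sub]
  exact abs_pEU_le hy hfg

end ExpectedUtility

section Deviation

variable [DecidableEq A] {x : Fin m → A → ℝ}

lemma deviate_empty (d : Fin m → A) : deviate x ∅ d = x := by
  funext i
  simp [deviate]

lemma deviate_insert {S : Finset (Fin m)} {k : Fin m} (hk : k ∉ S) (d : Fin m → A) :
    deviate x (insert k S) d = Function.update (deviate x S d) k (pureS (d k)) := by
  funext i
  rcases eq_or_ne i k with rfl | hik
  · simp [deviate]
  · simp [deviate, hik]

lemma IsMixedProfile.deviate [Fintype A] (hx : IsMixedProfile x) (S : Finset (Fin m))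
    (d : Fin m → A) :
    IsMixedProfile (deviate x S d) := by
  intro i
  by_cases hi : i ∈ S
  · simp only [_root_.deviate, hi, if_true, pureS]
    exact ⟨fun a => by split_ifs <;> norm_num, by simp⟩
  · simpa only [_root_.deviate, hi, if_false] using hx i

end Deviation

lemma Varied.nonneg [Fintype A] [DecidableEq A] {u : Fin m → (Fin m → A) → ℝ} {γ : ℝ}
    (hvar : Varied u γ) (i : Fin m) (s : Fin m → A) : 0 ≤ γ := by
  simpa using hvar i i i s (s i)

lemma Varied.abs_sub_pEU_deviate_le [Fintype A] [DecidableEq A]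
    {u : Fin m → (Fin m → A) → ℝ} {γ : ℝ} (hvar : Varied u γ) {x : Fin m → A → ℝ}
    (hx : IsMixedProfile x) (i j : Fin m) (S : Finset (Fin m)) (d : Fin m → A) :
    |(pEU (u i) (deviate x S d) - pEU (u i) x) - (pEU (u j) (deviate x S d) - pEU (u j) x)|
      ≤ γ * #S := by
  induction S using Finset.induction_on with
  | empty => simp [deviate_empty]
  | @insert k S hk ih =>
    set y := deviate x S d
    have hstep := abs_pEU_update_pureS_sub_sub_le (hx.deviate S d) k (d k)
      fun s => hvar k i j s (d k)
    rw [deviate_insert hk, card_insert_of_notMem hk, Nat.cast_succ, mul_add_one]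
    calc _ = |((pEU (u i) y - pEU (u i) x) - (pEU (u j) y - pEU (u j) x)) +
          ((pEU (u i) (Function.update y k (pureS (d k))) - pEU (u i) y) -
            (pEU (u j) (Function.update y k (pureS (d k))) - pEU (u j) y))| := by
          congr 1
          ring
      _ ≤ γ * #S + γ := (abs_add_le _ _).trans (add_le_add ih hstep)

theorem varied_nash_coalEnvyProof_general
    [Fintype A] [DecidableEq A]
    (u : Fin m → (Fin m → A) → ℝ) (γ : ℝ) (hvar : Varied u γ) (t : ℕ)
    (x : Fin m → A → ℝ) (hx : IsMixedProfile x) :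
    CoalEnvyProof u (γ * t) t x := by
  intro S hS d i _ j _
  have hdiff := (le_abs_self _).trans (hvar.abs_sub_pEU_deviate_le hx i j S d)
  have hcard : γ * #S ≤ γ * t :=
    mul_le_mul_of_nonneg_left (by exact_mod_cast hS) (hvar.nonneg i d)
  linarith

/-- in a γ-varied `m`-player game, every Nash equilibrium is
`(γt, t)`-coalitional envy-proof. -/
theorem varied_nash_coalEnvyProof
    [Fintype A] [DecidableEq A] [Nonempty A]
    (u : Fin m → (Fin m → A) → ℝ) (γ : ℝ) (hγ : 0 ≤ γ) (hvar : Varied u γ) (t : ℕ)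
    (x : Fin m → A → ℝ) (hx : IsMixedProfile x) (hNash : IsNashM u x) :
    CoalEnvyProof u (γ * t) t x :=
  varied_nash_coalEnvyProof_general u γ hvar t x hx
end
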